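/- Let T be a finite set of TGDs and ΣD, ΣQ schemas. Then T is ΣD,ΣQ-hom-trivial if and only if T is ΣD,ΣQ-CQ-trivial. -/

import Mathlib

set_option autoImplicit false

/-! ### Terms: constants from 𝐂 (coded `Term.const n`) and nulls from 𝐍 (coded `Term.null n`) -/

inductive Term : Type
  | const : ℕ → Term
  | null  : ℕ → Term
deriving DecidableEq

def Term.isConst : Term → Prop
  | .const _ => True
  | .null _  => False

def termEquiv : Term ≃ ℕ ⊕ ℕ where
  toFun t := match t with
    | .const n => Sum.inl n
    | .null n  => Sum.inr n
  invFun x := match x with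
    | Sum.inl n => .const n
    | Sum.inr n => .null n
  left_inv t := by cases t <;> rfl
  right_inv x := by cases x <;> rfl

instance : Primcodable Term := Primcodable.ofEquiv _ termEquiv

/-! ### Relation symbols (with arity) and schemas -/

structure RelSym : Type where
  name : ℕ
  arity : ℕ
deriving DecidableEq

def relSymEquiv : RelSym ≃ ℕ × ℕ where
  toFun r := (r.name, r.arity)
  invFun p := ⟨p.1, p.2⟩
  left_inv r := rfl
  right_inv p := rfl

instance : Primcodable RelSym := Primcodable.ofEquiv _ relSymEquiv

/-- A schema is a set of relation symbols. -/
abbrev Schema := Set RelSym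

/-! ### Facts, instances, databases -/

structure Fct : Type where
  rel : RelSym
  args : List Term
deriving DecidableEq

def fctEquiv : Fct ≃ RelSym × List Term where
  toFun f := (f.rel, f.args)
  invFun p := ⟨p.1, p.2⟩
  left_inv f := rfl
  right_inv p := rfl

instance : Primcodable Fct := Primcodable.ofEquiv _ fctEquiv

/-- A fact is well-formed if its argument tuple matches the arity of its relation symbol
(arities are ≥ 1). -/
def Fct.wf (f : Fct) : Prop := f.args.length = f.rel.arity ∧ 1 ≤ f.rel.arity

/-- An instance is a (possibly infinite) set of facts. -/
abbrev Inst := Set Fct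

/-- The active domain of an instance. -/
def adom (I : Inst) : Set Term := { t | ∃ f ∈ I, t ∈ f.args }

/-- A database: a finite instance of well-formed facts using only constants from 𝐂. -/
def IsDB (I : Inst) : Prop :=
  I.Finite ∧ ∀ f ∈ I, f.wf ∧ ∀ t ∈ f.args, t.isConst

/-- `I` is a Σ-instance. -/
def InstOver (I : Inst) (S : Schema) : Prop := ∀ f ∈ I, f.rel ∈ S ∧ f.wf

/-- `I` is a Σ-database. -/
def IsDatabase (I : Inst) (S : Schema) : Prop := IsDB I ∧ ∀ f ∈ I, f.rel ∈ S

/-! ### Homomorphisms -/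

def Fct.map (h : Term → Term) (f : Fct) : Fct := ⟨f.rel, f.args.map h⟩

/-- `h` is a Σ-homomorphism from `I` to `J`. -/
def IsHomOn (S : Schema) (h : Term → Term) (I J : Inst) : Prop :=
  ∀ f ∈ I, f.rel ∈ S → f.map h ∈ J

/-- `h` is a homomorphism from `I` to `J` (all relation symbols). -/
def IsFullHom (h : Term → Term) (I J : Inst) : Prop := ∀ f ∈ I, f.map h ∈ J

/-- `h` is database-preserving: it is the identity on all constants from 𝐂. -/
def DBPres (h : Term → Term) : Prop := ∀ n : ℕ, h (Term.const n) = Term.const n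

/-- `I →_Σ J`: there is a database-preserving Σ-homomorphism from `I` to `J`. -/
def HomTo (S : Schema) (I J : Inst) : Prop := ∃ h, DBPres h ∧ IsHomOn S h I J

/-- The induced subinstance of `I` on a set `A` of terms. -/
def restrict (I : Inst) (A : Set Term) : Inst := { f | f ∈ I ∧ ∀ t ∈ f.args, t ∈ A }

/-- `I →ⁿ_Σ J`: every induced subinstance of `I` with at most `n` active-domain elements
admits a database-preserving Σ-homomorphism to `J`. -/
def HomN (S : Schema) (n : ℕ) (I J : Inst) : Prop :=
  ∀ A : Set Term, A ⊆ adom I → A.Finite → A.ncard ≤ n → HomTo S (restrict I A) J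

/-- `I →^lim_Σ J`. -/
def HomLim (S : Schema) (I J : Inst) : Prop := ∀ n : ℕ, 1 ≤ n → HomN S n I J

/-- Homomorphic equivalence of instances. -/
def HomEquiv (I J : Inst) : Prop := (∃ h, IsFullHom h I J) ∧ (∃ h, IsFullHom h J I)

/-! ### Gaifman graph and connectedness -/

def coOccur (I : Inst) (a b : Term) : Prop := ∃ f ∈ I, a ∈ f.args ∧ b ∈ f.args

/-- The Gaifman graph of `I` is connected. -/
def Connected (I : Inst) : Prop :=
  ∀ a ∈ adom I, ∀ b ∈ adom I, Relation.ReflTransGen (coOccur I) a b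

/-- Restriction `I|_Σ` of `I` to the facts using a relation symbol from Σ. -/
def restrS (I : Inst) (S : Schema) : Inst := { f | f ∈ I ∧ f.rel ∈ S }

/-- `I` is Σ-connected. -/
def SConnected (S : Schema) (I : Inst) : Prop := Connected (restrS I S)

/-- `C` is a maximally Σ-connected component of `I`. -/
def MaxConnComp (S : Schema) (I C : Inst) : Prop :=
  C ⊆ restrS I S ∧ Connected C ∧
    ∀ C', C ⊆ C' → C' ⊆ restrS I S → Connected C' → C' = C

/-! ### Conjunctive queries -/

structure Atom : Type where
  rel : RelSym
  args : List ℕ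
deriving DecidableEq

def atomEquiv : Atom ≃ RelSym × List ℕ where
  toFun a := (a.rel, a.args)
  invFun p := ⟨p.1, p.2⟩
  left_inv a := rfl
  right_inv p := rfl

instance : Primcodable Atom := Primcodable.ofEquiv _ atomEquiv

def Atom.wf (a : Atom) : Prop := a.args.length = a.rel.arity ∧ 1 ≤ a.rel.arity

/-- Instantiate an atom by an assignment of terms to variables. -/
def Atom.inst (h : ℕ → Term) (a : Atom) : Fct := ⟨a.rel, a.args.map h⟩

/-- A conjunctive query: a finite set of relational atoms (as a list) together with a
tuple of answer variables. -/
structure CQ : Type where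
  atoms : List Atom
  ans : List ℕ
deriving DecidableEq

def cqEquiv : CQ ≃ List Atom × List ℕ where
  toFun q := (q.atoms, q.ans)
  invFun p := ⟨p.1, p.2⟩
  left_inv q := rfl
  right_inv p := rfl

instance : Primcodable CQ := Primcodable.ofEquiv _ cqEquiv

/-- `q` is a CQ over schema Σ. -/
def CQ.Over (q : CQ) (S : Schema) : Prop := ∀ a ∈ q.atoms, a.rel ∈ S ∧ a.wf

/-- A homomorphism from `q` to `I`. -/
def CQHom (q : CQ) (I : Inst) (h : ℕ → Term) : Prop := ∀ a ∈ q.atoms, a.inst h ∈ I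

/-- `c̄` is an answer to `q` on `I`. -/
def IsAnswer (q : CQ) (I : Inst) (c : List Term) : Prop :=
  (∀ x ∈ c, x ∈ adom I) ∧ ∃ h, CQHom q I h ∧ q.ans.map h = c

/-- The canonical database of a CQ (variables viewed as constants/nulls). -/
def canonDB (q : CQ) : Inst := { f | ∃ a ∈ q.atoms, f = a.inst Term.null }

/-! ### Tuple-generating dependencies -/

/-- A TGD `∀x̄∀ȳ (φ(x̄,ȳ) → ∃z̄ ψ(x̄,z̄))`, with `frontier` the tuple `x̄` of
frontier variables. -/
structure TGD : Type where
  body : List Atom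
  head : List Atom
  frontier : List ℕ
deriving DecidableEq

def tgdEquiv : TGD ≃ List Atom × List Atom × List ℕ where
  toFun t := (t.body, t.head, t.frontier)
  invFun p := ⟨p.1, p.2.1, p.2.2⟩
  left_inv t := rfl
  right_inv p := rfl

instance : Primcodable TGD := Primcodable.ofEquiv _ tgdEquiv

def TGD.bodyVars (t : TGD) : Set ℕ := { x | ∃ a ∈ t.body, x ∈ a.args }
def TGD.headVars (t : TGD) : Set ℕ := { x | ∃ a ∈ t.head, x ∈ a.args }

/-- Well-formedness of a TGD: atoms are well-formed, the frontier variables are distinct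
body variables, and every variable shared by body and head is a frontier variable. -/
def TGD.wf (t : TGD) : Prop :=
  (∀ a ∈ t.body, a.wf) ∧ (∀ a ∈ t.head, a.wf) ∧ t.frontier.Nodup ∧
  (∀ x ∈ t.frontier, x ∈ t.bodyVars) ∧
  (∀ x, x ∈ t.bodyVars → x ∈ t.headVars → x ∈ t.frontier)

/-- A TGD is linear if its body contains at most one atom. -/
def TGD.Linear (t : TGD) : Prop := t.body.length ≤ 1

/-- A TGD is guarded if some body atom contains all body variables. -/
def TGD.Guarded (t : TGD) : Prop := ∃ a ∈ t.body, ∀ x, x ∈ t.bodyVars → x ∈ a.args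

/-- A TGD is frontier-one if it has exactly one frontier variable. -/
def TGD.FrontierOne (t : TGD) : Prop := t.frontier.length = 1

/-- `I ⊨ ϑ`. -/
def TGD.Satisfies (I : Inst) (t : TGD) : Prop :=
  ∀ g : ℕ → Term, (∀ a ∈ t.body, a.inst g ∈ I) →
    ∃ h : ℕ → Term, (∀ a ∈ t.head, a.inst h ∈ I) ∧ ∀ x ∈ t.frontier, h x = g x

/-- `I` is a model of the set `T` of TGDs. -/
def IsModel (I : Inst) (T : List TGD) : Prop := ∀ t ∈ T, TGD.Satisfies I t

/-- Number of (distinct) variables in the body of a TGD. -/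
def TGD.bodyVarList (t : TGD) : List ℕ := ((t.body.map Atom.args).flatten).dedup

/-- The body width of a set of TGDs. -/
def bodyWidth (T : List TGD) : ℕ := (T.map (fun t => t.bodyVarList.length)).foldr max 0

/-! ### The chase -/

/-- `ϑ` is applicable at tuple `c̄` in `I`. -/
def TGD.Applicable (t : TGD) (I : Inst) (c : List Term) : Prop :=
  (∃ g : ℕ → Term, (∀ a ∈ t.body, a.inst g ∈ I) ∧ t.frontier.map g = c) ∧
  ¬ (∃ h : ℕ → Term, (∀ a ∈ t.head, a.inst h ∈ I) ∧ t.frontier.map h = c)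

/-- `J` is the result of applying `ϑ` in `I` at `c̄`: the head is added, with the
existential variables replaced by distinct fresh nulls. -/
def TGD.StepResult (t : TGD) (I : Inst) (c : List Term) (J : Inst) : Prop :=
  ∃ h : ℕ → Term,
    t.frontier.map h = c ∧
    (∀ x, x ∈ t.headVars → x ∉ t.frontier → (¬ (h x).isConst ∧ h x ∉ adom I)) ∧
    (∀ x y, x ∈ t.headVars → y ∈ t.headVars → x ∉ t.frontier → y ∉ t.frontier →
      h x = h y → x = y) ∧
    J = I ∪ { f | ∃ a ∈ t.head, f = a.inst h }

/-- A chase step from `I` to `J` with some TGD of `T`. -/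
def ChaseStep (T : List TGD) (I J : Inst) : Prop :=
  ∃ t ∈ T, ∃ c, t.Applicable I c ∧ t.StepResult I c J

/-- A chase sequence for `I` with `T` (stalling when no TGD is applicable). -/
def IsChaseSeq (T : List TGD) (I : Inst) (f : ℕ → Inst) : Prop :=
  f 0 = I ∧ ∀ i, ChaseStep T (f i) (f (i+1)) ∨ ((¬ ∃ J, ChaseStep T (f i) J) ∧ f (i+1) = f i)

/-- Fairness: every applicable TGD application is eventually performed or becomes
non-applicable. -/
def IsFair (T : List TGD) (f : ℕ → Inst) : Prop :=
  ∀ i, ∀ t ∈ T, ∀ c, TGD.Applicable t (f i) c →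
    ∃ j, i ≤ j ∧
      ((TGD.Applicable t (f j) c ∧ TGD.StepResult t (f j) c (f (j+1))) ∨
        ¬ TGD.Applicable t (f j) c)

/-- `J` is the result of some fair chase sequence for `I` with `T`. -/
def IsChaseResult (T : List TGD) (I J : Inst) : Prop :=
  ∃ f : ℕ → Inst, IsChaseSeq T I f ∧ IsFair T f ∧ J = ⋃ i, f i

/-- `chase T I`: the result of an arbitrary but fixed fair chase sequence for `I` with `T`. -/
noncomputable def chase (T : List TGD) (I : Inst) : Inst :=
  @dite _ (∃ J, IsChaseResult T I J) (Classical.dec _) (fun h => h.choose) (fun _ => I)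

/-! ### Query answering w.r.t. TGDs and conservativity notions -/

/-- `c̄ ∈ q_T(D)`: `c̄` is a tuple over `adom D` and an answer to `q` on `chase T D`. -/
def AnswerWrt (q : CQ) (T : List TGD) (D : Inst) (c : List Term) : Prop :=
  (∀ x ∈ c, x ∈ adom D) ∧ ∃ h, CQHom q (chase T D) h ∧ q.ans.map h = c

/-- `T2` is `ΣD,ΣQ`-hom-conservative over `T1`. -/
def HomConservative (T1 T2 : List TGD) (SD SQ : Schema) : Prop :=
  ∀ D, IsDatabase D SD → HomTo SQ (chase T2 D) (chase T1 D)

/-- `T2` is `ΣD,ΣQ`-CQ-conservative over `T1`. -/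
def CQConservative (T1 T2 : List TGD) (SD SQ : Schema) : Prop :=
  ∀ D, IsDatabase D SD → ∀ q : CQ, CQ.Over q SQ →
    ∀ c, AnswerWrt q T2 D c → AnswerWrt q T1 D c

/-- `T` is `ΣD,ΣQ`-hom-trivial. -/
def HomTrivial (T : List TGD) (SD SQ : Schema) : Prop :=
  ∀ D, IsDatabase D SD → HomTo SQ (chase T D) D

/-- `T` is `ΣD,ΣQ`-CQ-trivial. -/
def CQTrivial (T : List TGD) (SD SQ : Schema) : Prop :=
  ∀ D, IsDatabase D SD → ∀ q : CQ, CQ.Over q SQ →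
    ∀ c, AnswerWrt q T D c → IsAnswer q D c

/-!
A database-preserving homomorphism from the chase into `D` turns every match of a query on the
chase into a match on `D` and fixes the answer tuple, which consists of constants.

Conversely, freeze a finite part of the chase into a CQ whose variables are its terms and whose
answer variables are the constants of `D`. This tuple is an answer on the chase, so by
CQ-triviality an answer on `D`, and the witnessing match is a database-preserving homomorphism
from that finite part into `D`. Since `D` has a finite active domain, these homomorphisms glue,
along an ultrafilter on the finite sets of facts, to a single homomorphism from the whole chase.
-/

lemma Fct.map_id (F : Fct) : F.map id = F := by
  simp [Fct.map]

lemma Atom.inst_map (g : Term → Term) (h : ℕ → Term) (a : Atom) :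
    (a.inst h).map g = a.inst (g ∘ h) := by
  simp [Atom.inst, Fct.map]

lemma IsDB.adom_finite {D : Inst} (hD : IsDB D) : (adom D).Finite := by
  refine (hD.1.biUnion fun F _ => F.args.finite_toSet).subset ?_
  rintro t ⟨F, hF, ht⟩
  exact Set.mem_biUnion hF ht

lemma IsDB.isConst_of_mem_adom {D : Inst} (hD : IsDB D) {t : Term} (ht : t ∈ adom D) :
    t.isConst := by
  obtain ⟨F, hF, htF⟩ := ht
  exact (hD.2 F hF).2 t htF

lemma DBPres.apply_eq_self {g : Term → Term} (hg : DBPres g) {t : Term} (ht : t.isConst) :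
    g t = t := by
  cases t with
  | const n => exact hg n
  | null n => exact ht.elim

lemma CQHom.comp {q : CQ} {S : Schema} {g : Term → Term} {I J : Inst} {v : ℕ → Term}
    (hq : q.Over S) (hg : IsHomOn S g I J) (hv : CQHom q I v) : CQHom q J (g ∘ v) := by
  intro a ha
  rw [← Atom.inst_map]
  exact hg _ (hv a ha) (hq a ha).1

def withConstsFixed (g : Term → Term) : Term → Term
  | .const n => .const n
  | .null n => g (.null n)

lemma dbPres_withConstsFixed (g : Term → Term) : DBPres (withConstsFixed g) := fun _ => rfl

lemma Fct.map_withConstsFixed {g : Term → Term} {F : Fct}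
    (hg : ∀ t ∈ F.args, t.isConst → g t = t) : F.map (withConstsFixed g) = F.map g := by
  simp only [Fct.map, Fct.mk.injEq, List.map_inj_left, true_and]
  rintro (n | n) hn
  · exact (hg _ hn trivial).symm
  · rfl

section Compactness

open Filter

theorem homTo_of_forall_finite_subset {S : Schema} {I J : Inst} (hJ : (adom J).Finite)
    (hfin : ∀ s ⊆ I, s.Finite → HomTo S s J) : HomTo S I J := by
  choose G hGpres hGhom using fun s : Finset Fct =>
    hfin (↑s ∩ I) Set.inter_subset_right (s.finite_toSet.inter_of_left I)
  obtain ⟨U, hU⟩ := Ultrafilter.exists_le (atTop : Filter (Finset Fct))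
  have hmem : ∀ F ∈ I, ∀ᶠ s in (U : Filter (Finset Fct)), F ∈ s := fun F _ =>
    hU (eventually_ge_atTop {F} |>.mono fun s hs => Finset.singleton_subset_iff.1 hs)
  -- `g t` is the limit of `G s t` along `U` whenever that limit exists
  have hlim : ∀ t, ∃ v, ∀ w, (∀ᶠ s in U, G s t = w) → ∀ᶠ s in U, G s t = v := by
    intro t
    by_cases hw : ∃ w, ∀ᶠ s in U, G s t = w
    · obtain ⟨w, hw⟩ := hw
      exact ⟨w, fun _ _ => hw⟩
    · exact ⟨t, fun w h => (hw ⟨w, h⟩).elim⟩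
  choose g hg using hlim
  refine ⟨g, fun n => ?_, fun F hF hFS => ?_⟩
  · have hconst : ∀ᶠ s in U, G s (.const n) = .const n := Eventually.of_forall fun s => hGpres s n
    obtain ⟨s, hs, hs'⟩ := (hconst.and (hg _ _ hconst)).exists
    exact hs'.symm.trans hs
  · have himage : ∀ᶠ s in U, F.map (G s) ∈ J :=
      (hmem F hF).mono fun s hs => hGhom s F ⟨hs, hF⟩ hFS
    have hargs : ∀ t ∈ F.args, ∀ᶠ s in U, G s t = g t := by
      intro t ht
      have hadom : ∀ᶠ s in U, ∃ v ∈ adom J, G s t = v :=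
        himage.mono fun s hs => ⟨G s t, ⟨_, hs, List.mem_map_of_mem ht⟩, rfl⟩
      obtain ⟨w, -, hw⟩ := (Ultrafilter.eventually_exists_mem_iff hJ).1 hadom
      exact hg t w hw
    obtain ⟨s, hs, hst⟩ := (himage.and (F.args.finite_toSet.eventually_all.2 hargs)).exists
    have : F.map g = F.map (G s) := by
      simp only [Fct.map, Fct.mk.injEq, List.map_inj_left, true_and]
      exact fun t ht => (hst t ht).symm
    rwa [this]

end Compactness

section ChaseInvariant

def WfConstsIn (A : Set Term) (I : Inst) : Prop :=
  ∀ F ∈ I, F.wf ∧ ∀ t ∈ F.args, t.isConst → t ∈ A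

lemma IsDB.wfConstsIn_adom {D : Inst} (hD : IsDB D) : WfConstsIn (adom D) D :=
  fun F hF => ⟨(hD.2 F hF).1, fun _ ht _ => ⟨F, hF, ht⟩⟩

variable {T : List TGD} {A : Set Term}

lemma ChaseStep.wfConstsIn {I J : Inst} (hT : ∀ t ∈ T, t.wf) (hstep : ChaseStep T I J)
    (hI : WfConstsIn A I) : WfConstsIn A J := by
  obtain ⟨t, htT, _, ⟨⟨g, hg, rfl⟩, -⟩, h, hfr, hfresh, -, rfl⟩ := hstep
  obtain ⟨-, hhead, -, hfrbody, -⟩ := hT t htT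
  rintro F (hF | ⟨a, ha, rfl⟩)
  · exact hI F hF
  refine ⟨by simpa [Fct.wf, Atom.inst, Atom.wf] using hhead a ha, ?_⟩
  simp only [Atom.inst, List.mem_map]
  rintro _ ⟨x, hx, rfl⟩ hconst
  by_cases hxfr : x ∈ t.frontier
  · -- a frontier variable is sent to a term of the body match, already present in `I`
    rw [List.map_inj_left.1 hfr x hxfr] at hconst ⊢
    obtain ⟨b, hb, hxb⟩ := hfrbody x hxfr
    exact (hI _ (hg b hb)).2 _ (List.mem_map_of_mem hxb) hconst
  · exact ((hfresh x ⟨a, ha, hx⟩ hxfr).1 hconst).elim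

lemma IsChaseSeq.wfConstsIn {I : Inst} {f : ℕ → Inst} (hT : ∀ t ∈ T, t.wf)
    (hf : IsChaseSeq T I f) (hI : WfConstsIn A I) (i : ℕ) : WfConstsIn A (f i) := by
  induction i with
  | zero => rwa [hf.1]
  | succ i ih =>
    rcases hf.2 i with hstep | ⟨-, hstall⟩
    · exact hstep.wfConstsIn hT ih
    · rwa [hstall]

lemma chase_wfConstsIn {I : Inst} (hT : ∀ t ∈ T, t.wf) (hI : WfConstsIn A I) :
    WfConstsIn A (chase T I) := by
  unfold chase
  split_ifs with hex
  · obtain ⟨f, hf, -, hJ⟩ := hex.choose_spec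
    rw [hJ]
    rintro F ⟨-, ⟨i, rfl⟩, hF⟩
    exact hf.wfConstsIn hT hI i F hF
  · exact hI

end ChaseInvariant

section Freezing

open Encodable

def Fct.freeze (F : Fct) : Atom := ⟨F.rel, F.args.map encode⟩

def frozenCQ (L : List Fct) (c : List Term) : CQ := ⟨L.map Fct.freeze, c.map encode⟩

lemma Fct.freeze_inst (v : ℕ → Term) (F : Fct) : F.freeze.inst v = F.map (v ∘ encode) := by
  simp [Fct.freeze, Atom.inst, Fct.map]

lemma cqHom_frozenCQ_iff {L : List Fct} {c : List Term} {I : Inst} {v : ℕ → Term} :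
    CQHom (frozenCQ L c) I v ↔ ∀ F ∈ L, F.map (v ∘ encode) ∈ I := by
  simp [CQHom, frozenCQ, Fct.freeze_inst]

lemma frozenCQ_over {L : List Fct} {c : List Term} {S : Schema} (hL : ∀ F ∈ L, F.rel ∈ S ∧ F.wf) :
    (frozenCQ L c).Over S := by
  simp only [CQ.Over, frozenCQ, List.mem_map]
  rintro _ ⟨F, hF, rfl⟩
  obtain ⟨hS, hlen, hpos⟩ := hL F hF
  exact ⟨hS, by simpa [Fct.freeze] using hlen, hpos⟩

def thawVar (n : ℕ) : Term := (decode n).getD (.const 0)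

lemma thawVar_comp_encode : thawVar ∘ encode = id := by
  funext t
  simp [thawVar, encodek]

lemma CQTrivial.homTo_of_finite_subset_chase {T : List TGD} {SD SQ : Schema} {D s : Inst}
    (hcq : CQTrivial T SD SQ) (hD : IsDatabase D SD)
    (hchase : WfConstsIn (adom D) (chase T D)) (hs : s ⊆ chase T D) (hfin : s.Finite) :
    HomTo SQ s D := by
  classical
  set L := (hfin.toFinset.filter (·.rel ∈ SQ)).toList
  set c := hD.1.adom_finite.toFinset.toList
  have hL : ∀ F, F ∈ L ↔ F ∈ s ∧ F.rel ∈ SQ := by simp [L]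
  have hc : ∀ t, t ∈ c ↔ t ∈ adom D := by simp [c]
  have hover : (frozenCQ L c).Over SQ := frozenCQ_over fun F hF =>
    have hF := (hL F).1 hF
    ⟨hF.2, (hchase F (hs hF.1)).1⟩
  have hans : AnswerWrt (frozenCQ L c) T D c := by
    refine ⟨fun t ht => (hc t).1 ht, thawVar, ?_, by simp [frozenCQ, thawVar_comp_encode]⟩
    rw [cqHom_frozenCQ_iff, thawVar_comp_encode]
    intro F hF
    rw [Fct.map_id]
    exact hs ((hL F).1 hF).1
  obtain ⟨-, v, hv, hvc⟩ := hcq D hD _ hover c hans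
  have hfix : ∀ t ∈ adom D, v (encode t) = t := by
    have hvc' : c.map (v ∘ encode) = c.map id := by simpa [frozenCQ] using hvc
    exact fun t ht => List.map_inj_left.1 hvc' t ((hc t).2 ht)
  refine ⟨withConstsFixed (v ∘ encode), dbPres_withConstsFixed _, fun F hF hFS => ?_⟩
  rw [Fct.map_withConstsFixed (g := v ∘ encode) fun t ht hconst =>
    hfix t ((hchase F (hs hF)).2 t ht hconst)]
  exact cqHom_frozenCQ_iff.1 hv F ((hL F).2 ⟨hF, hFS⟩)

end Freezing

/-- Lemma 5: `T` is `ΣD,ΣQ`-hom-trivial iff it is `ΣD,ΣQ`-CQ-trivial. -/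
theorem hom_trivial_iff_cq_trivial (T : List TGD) (SD SQ : Schema) (hT : ∀ t ∈ T, t.wf) :
    HomTrivial T SD SQ ↔ CQTrivial T SD SQ := by
  constructor
  · intro hhom D hD q hq c ⟨hc, v, hv, hvc⟩
    obtain ⟨g, hgpres, hg⟩ := hhom D hD
    refine ⟨hc, g ∘ v, hv.comp hq hg, ?_⟩
    rw [← List.map_map, hvc, List.map_congr_left fun t ht =>
      hgpres.apply_eq_self (hD.1.isConst_of_mem_adom (hc t ht)), List.map_id']
  · intro hcq D hD
    exact homTo_of_forall_finite_subset hD.1.adom_finite fun s hs hfin =>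
      hcq.homTo_of_finite_subset_chase hD (chase_wfConstsIn hT hD.1.wfConstsIn_adom) hs hfin
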